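/- arXiv:2404.00527 — 8 statements merged into one kernel-verified Lean document; each statement's English description precedes it below -/
import Mathlib

section
/- For all integers m, n ≥ 0 and real (or formal) variables x_{r,j} for r ∈ [1,n], j ∈ [1,m], the sum over all nondecreasing sequences 0 ≤ i_1 ≤ ... ≤ i_m ≤ n of the product over j = 1..m of (1 - 1[i_{j+1} > i_j] · x_{i_j+1, j}) · (∏_{r=1}^{i_j} x_{r,j}) equals 1, where by convention i_{m+1} = n. -/
/-!
Induct on `m`, splitting the sum according to the last entry `k = i_m`. The last factor depends
only on `k`, and the remaining entries range over the nondecreasing sequences bounded by `k`, whose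
weights (with the convention `i_m = k`) sum to `1` by induction. What is left is
`∑_{k ≤ n} (1 - [k < n] y_{k+1}) ∏_{r ≤ k} y_r`, which telescopes to `∏_{r ≤ 0} y_r = 1`.
-/

open Finset

namespace NestedGeometric

variable {R : Type*} [CommRing R]

def weight (y : ℕ → R) (a b : ℕ) : R :=
  (1 - if a < b then y (a + 1) else 0) * ∏ r ∈ Icc 1 a, y r

theorem sum_weight (y : ℕ → R) (n : ℕ) : ∑ a ∈ range (n + 1), weight y a n = 1 := by
  set P : ℕ → R := fun a => ∏ r ∈ Icc 1 a, y r
  have step : ∀ a ∈ range n, weight y a n = P a - P (a + 1) := fun a ha => by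
    rw [mem_range] at ha
    simp only [weight, if_pos ha, P, prod_Icc_succ_top (Nat.le_add_left 1 a)]
    ring
  have top : weight y n n = P n := by simp [weight, P]
  rw [sum_range_succ, sum_congr rfl step, sum_range_sub', top]
  simp [P]

theorem monotone_snoc_iff {α : Type*} [Preorder α] {m : ℕ} {i : Fin m → α} {k : α} :
    Monotone (Fin.snoc i k : Fin (m + 1) → α) ↔ Monotone i ∧ ∀ j, i j ≤ k := by
  refine ⟨fun h => ⟨fun a b hab => ?_, fun j => ?_⟩, fun ⟨hi, hk⟩ => ?_⟩
  · simpa using h (Fin.castSucc_le_castSucc_iff.mpr hab)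
  · simpa using h (Fin.castSucc_lt_last j).le
  · intro a b hab
    induction b using Fin.lastCases with
    | last => induction a using Fin.lastCases <;> simp [hk]
    | cast b =>
      induction a using Fin.lastCases with
      | last => exact absurd hab (Fin.castSucc_lt_last b).not_ge
      | cast a => simpa using hi (Fin.castSucc_le_castSucc_iff.mp hab)

def nextOr {m : ℕ} (i : Fin m → ℕ) (t : ℕ) (j : Fin m) : ℕ :=
  if h : (j : ℕ) + 1 < m then i ⟨j + 1, h⟩ else t

theorem nextOr_snoc_castSucc {m : ℕ} (i : Fin m → ℕ) (k t : ℕ) (j : Fin m) :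
    nextOr (Fin.snoc i k : Fin (m + 1) → ℕ) t j.castSucc = nextOr i k j := by
  have hlt : (j.castSucc : ℕ) + 1 < m + 1 := by simp
  by_cases h : (j : ℕ) + 1 < m
  · rw [nextOr, nextOr, dif_pos hlt, dif_pos h]
    exact Fin.snoc_castSucc (α := fun _ => ℕ) k i ⟨j + 1, h⟩
  · have hj : (⟨j.castSucc + 1, hlt⟩ : Fin (m + 1)) = Fin.last m := by ext; simp; omega
    rw [nextOr, nextOr, dif_pos hlt, dif_neg h, hj, Fin.snoc_last]

theorem nextOr_snoc_last {m : ℕ} (i : Fin m → ℕ) (k t : ℕ) :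
    nextOr (Fin.snoc i k : Fin (m + 1) → ℕ) t (Fin.last m) = t := by
  simp [nextOr]

def seqWeight (x : ℕ → ℕ → R) {m : ℕ} (i : Fin m → ℕ) (t : ℕ) : R :=
  ∏ j : Fin m, weight (x · (j + 1)) (i j) (nextOr i t j)

theorem seqWeight_snoc (x : ℕ → ℕ → R) {m : ℕ} (i : Fin m → ℕ) (k t : ℕ) :
    seqWeight x (Fin.snoc i k : Fin (m + 1) → ℕ) t = seqWeight x i k * weight (x · (m + 1)) k t := by
  simp [seqWeight, Fin.prod_univ_castSucc, nextOr_snoc_castSucc, nextOr_snoc_last]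

def monotoneSeqs (m n : ℕ) : Finset (Fin m → ℕ) :=
  {i ∈ Fintype.piFinset fun _ => range (n + 1) | Monotone i}

theorem snoc_mem_monotoneSeqs_iff {m n : ℕ} {i : Fin m → ℕ} {k : ℕ} :
    (Fin.snoc i k : Fin (m + 1) → ℕ) ∈ monotoneSeqs (m + 1) n ↔
      k ∈ range (n + 1) ∧ i ∈ monotoneSeqs m k := by
  simp only [monotoneSeqs, mem_filter, Fintype.mem_piFinset, mem_range, Fin.forall_fin_succ',
    Fin.snoc_castSucc, Fin.snoc_last, monotone_snoc_iff, Nat.lt_succ_iff]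
  exact ⟨fun ⟨⟨_, hk⟩, hi, hik⟩ => ⟨hk, hik, hi⟩,
    fun ⟨hk, hik, hi⟩ => ⟨⟨fun j => (hik j).trans hk, hk⟩, hi, hik⟩⟩

theorem sum_monotoneSeqs_succ {m n : ℕ} (f : (Fin (m + 1) → ℕ) → R) :
    ∑ i ∈ monotoneSeqs (m + 1) n, f i =
      ∑ k ∈ range (n + 1), ∑ i ∈ monotoneSeqs m k, f (Fin.snoc i k) := by
  rw [sum_sigma']
  refine sum_nbij' (fun i => ⟨i (Fin.last m), Fin.init i⟩) (fun p => Fin.snoc p.2 p.1)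
    (fun i hi => ?_) (fun p hp => ?_) (fun i _ => Fin.snoc_init_self i)
    (fun p _ => by simp) (fun i _ => by simp)
  · rw [← Fin.snoc_init_self i, snoc_mem_monotoneSeqs_iff] at hi
    simpa using hi
  · rw [mem_sigma] at hp
    exact snoc_mem_monotoneSeqs_iff.mpr hp

theorem sum_monotoneSeqs_seqWeight (x : ℕ → ℕ → R) (m n : ℕ) :
    ∑ i ∈ monotoneSeqs m n, seqWeight x i n = 1 := by
  induction m generalizing n with
  | zero => simp [monotoneSeqs, seqWeight, Subsingleton.monotone]
  | succ m ih =>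
    simp only [sum_monotoneSeqs_succ, seqWeight_snoc, ← sum_mul, ih, one_mul]
    exact sum_weight _ n

theorem sum_monotone_fin_eq_sum_monotoneSeqs {m n : ℕ} (f : (Fin m → ℕ) → R) :
    ∑ i ∈ ({i | Monotone i} : Finset (Fin m → Fin (n + 1))), f (Fin.val ∘ i) =
      ∑ i ∈ monotoneSeqs m n, f i := by
  have val_cast {i : Fin m → ℕ} (hi : i ∈ monotoneSeqs m n) (j : Fin m) :
      (Fin.ofNat (n + 1) (i j) : ℕ) = i j := by
    simp only [monotoneSeqs, mem_filter, Fintype.mem_piFinset, mem_range] at hi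
    exact Nat.mod_eq_of_lt (hi.1 j)
  refine sum_nbij' (Fin.val ∘ ·) (fun i j => Fin.ofNat (n + 1) (i j)) (fun i hi => ?_)
    (fun i hi => ?_) (fun i _ => by ext; simp) (fun i hi => funext (val_cast hi)) (fun _ _ => rfl)
  · simp only [monotoneSeqs, mem_filter, Fintype.mem_piFinset, mem_range] at hi ⊢
    exact ⟨fun j => (i j).isLt, Fin.val_strictMono.monotone.comp hi.2⟩
  · have hmono := (mem_filter.mp hi).2
    simp only [mem_filter, mem_univ, true_and]
    intro a b hab
    simpa only [Fin.le_def, val_cast hi] using hmono hab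

end NestedGeometric

open NestedGeometric in
/-- For all m, n ≥ 0 and variables x_{r,j} in a commutative ring, the sum over
all nondecreasing sequences 0 ≤ i_1 ≤ ... ≤ i_m ≤ n of
∏_{j=1}^m (1 - 1[i_{j+1} > i_j]·x_{i_j+1, j})·(∏_{r=1}^{i_j} x_{r,j}) equals 1,
with the convention i_{m+1} = n. -/
theorem nested_geometric_identity {R : Type*} [CommRing R] (m n : ℕ) (x : ℕ → ℕ → R) :
    ∑ i ∈ Finset.filter (fun i : Fin m → Fin (n + 1) => Monotone i) Finset.univ,
      ∏ j : Fin m,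
        ((1 - (if (i j : ℕ) < (if h : (j : ℕ) + 1 < m then ((i ⟨(j : ℕ) + 1, h⟩ : Fin (n + 1)) : ℕ) else n)
                then x ((i j : ℕ) + 1) ((j : ℕ) + 1) else 0))
          * ∏ r ∈ Finset.Icc 1 (i j : ℕ), x r ((j : ℕ) + 1)) = 1 :=
  (sum_monotone_fin_eq_sum_monotoneSeqs (seqWeight x · n)).trans (sum_monotoneSeqs_seqWeight x m n)
end

section
/- For any f ≥ 1, consider the two random variables X_1 = 1 deterministically and X_2 = (1+f) with probability 1/(1+f) and 0 otherwise. Then E[max{X_1, X_2}] = (2f+1)/(f+1), and every online stopping policy with buyback cost f (which may accept X_1, and upon seeing X_2 may pay f·X_1 to swap to X_2) achieves expected net reward at most 1. Consequently no online policy achieves competitive ratio better than (1+f)/(1+2f) on this instance. -/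
/-!
With `p = 1 / (1 + f)` the buyback cost exactly cancels the premium of `X₂`: swapping from
`X₁ = 1` to `X₂ = 1 + f` nets `(1 + f) - f = 1`, and accepting `X₂` from scratch is worth
`p (1 + f) = 1` in expectation. So a policy that accepts `X₁` with probability `q₁` and otherwise
accepts `X₂` with probability `q₃` earns `q₁ + (1 - q₁) q₃ ≤ 1`, while `E[max] = 2 - p`.
-/

lemma buyback_reward_eq {p f : ℝ} (hp : p * (1 + f) = 1) (q₁ q₂ q₃ : ℝ) :
    q₁ * (p * (q₂ * ((1 + f) - f * 1) + (1 - q₂) * 1) + (1 - p) * 1)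
      + (1 - q₁) * (p * (q₃ * (1 + f))) = q₁ + (1 - q₁) * q₃ := by
  linear_combination (1 - q₁) * q₃ * hp

lemma add_one_sub_mul_le_one {a b : ℝ} (ha : a ≤ 1) (hb : b ≤ 1) : a + (1 - a) * b ≤ 1 := by
  nlinarith

theorem two_variable_hard_instance_general (f : ℝ) (hf : 1 ≤ f)
    (q₁ q₂ q₃ : ℝ) (h₁ : q₁ ∈ Set.Icc (0 : ℝ) 1)
    (h₃ : q₃ ∈ Set.Icc (0 : ℝ) 1) :
    let p : ℝ := 1 / (1 + f)            -- probability that X₂ = 1 + f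
    let Emax : ℝ := p * (1 + f) + (1 - p) * 1
    let reward : ℝ :=
      q₁ * (p * (q₂ * ((1 + f) - f * 1) + (1 - q₂) * 1) + (1 - p) * 1)
        + (1 - q₁) * (p * (q₃ * (1 + f)))
    Emax = (2 * f + 1) / (f + 1) ∧ reward ≤ 1 ∧ reward ≤ ((1 + f) / (1 + 2 * f)) * Emax := by
  intro p Emax reward
  have hf₀ : 1 + f ≠ 0 := by linarith
  have hp : p * (1 + f) = 1 := one_div_mul_cancel hf₀
  have hEmax : Emax = (2 * f + 1) / (f + 1) := by
    simp only [Emax, p]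
    field_simp
    ring
  have hreward : reward ≤ 1 :=
    (buyback_reward_eq hp q₁ q₂ q₃).trans_le (add_one_sub_mul_le_one h₁.2 h₃.2)
  have hratio : (1 + f) / (1 + 2 * f) * Emax = 1 := by
    rw [hEmax]
    field_simp
    ring
  exact ⟨hEmax, hreward, hreward.trans_eq hratio.symm⟩

/-- For f ≥ 1, the instance X₁ = 1 (deterministic) and
X₂ = (1+f)·Ber(1/(1+f)) satisfies E[max{X₁,X₂}] = (2f+1)/(f+1); every online policy
(parameterized by the probability q₁ of accepting X₁, the probability q₂ of swapping to
X₂ = 1+f while holding X₁ — paying buyback cost f·1 — and the probability q₃ of accepting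
X₂ = 1+f when holding nothing) gets expected net reward at most 1; consequently no online
policy beats competitive ratio (1+f)/(1+2f) on this instance. -/
theorem two_variable_hard_instance (f : ℝ) (hf : 1 ≤ f)
    (q₁ q₂ q₃ : ℝ) (h₁ : q₁ ∈ Set.Icc (0 : ℝ) 1) (h₂ : q₂ ∈ Set.Icc (0 : ℝ) 1)
    (h₃ : q₃ ∈ Set.Icc (0 : ℝ) 1) :
    let p : ℝ := 1 / (1 + f)            -- probability that X₂ = 1 + f
    let Emax : ℝ := p * (1 + f) + (1 - p) * 1
    let reward : ℝ :=
      q₁ * (p * (q₂ * ((1 + f) - f * 1) + (1 - q₂) * 1) + (1 - p) * 1)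
        + (1 - q₁) * (p * (q₃ * (1 + f)))
    Emax = (2 * f + 1) / (f + 1) ∧ reward ≤ 1 ∧ reward ≤ ((1 + f) / (1 + 2 * f)) * Emax :=
  two_variable_hard_instance_general f hf q₁ q₂ q₃ h₁ h₃
end

section
/- For 0 < f < 1, the function g(x) = (x - f) / (x + f·(x - 1 - x f)/((x-1)(1+f))) over x ≥ 1+f attains its minimum at x* = (f + 2 + sqrt(f(2-f)))/2, and the minimum value equals (1+f)(sqrt(f(2-f)) + 1) / ((1+f)·sqrt(f(2-f)) + 3f + 1). -/
/-!
On `x ≥ 1 + f` both the numerator `(x - f)(x - 1)(1 + f)` and the denominator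
`D(x) = (1 + f)x² - (1 + f²)x - f` of `g` (after clearing the inner fraction) are positive.
With `s = √(f(2 - f))` and `M = (1 + f)s + 3f + 1`, the identity
`(x - f)(x - 1)(1 + f) · M = (1 + f)(s + 1) · D(x) + f(1 + f)/2 · (2x - f - 2 - s)²`
shows `g(x) ≥ (1 + f)(s + 1)/M`, with equality exactly where the square vanishes, at `x*`.
-/

namespace ThreeVariableRatio

noncomputable def ratio (f x : ℝ) : ℝ :=
  (x - f) / (x + f * (x - 1 - x * f) / ((x - 1) * (1 + f)))

def clearedDenom (f x : ℝ) : ℝ :=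
  (1 + f) * x ^ 2 - (1 + f * f) * x - f

noncomputable def minValue (f s : ℝ) : ℝ :=
  (1 + f) * (s + 1) / ((1 + f) * s + 3 * f + 1)

variable {f s x : ℝ}

lemma ratio_eq_div_clearedDenom (hf : 1 + f ≠ 0) (hx : x - 1 ≠ 0) :
    ratio f x = (x - f) * ((x - 1) * (1 + f)) / clearedDenom f x := by
  have hden : x + f * (x - 1 - x * f) / ((x - 1) * (1 + f))
      = clearedDenom f x / ((x - 1) * (1 + f)) := by
    unfold clearedDenom
    field_simp
    ring
  rw [ratio, hden, div_div_eq_mul_div]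

lemma clearedDenom_pos (hf : 0 < f) (hx : 1 + f ≤ x) : 0 < clearedDenom f x := by
  unfold clearedDenom
  nlinarith [sq_nonneg (x - 1 - f)]

lemma mul_sub_mul_clearedDenom_eq_sq (hs : s ^ 2 = f * (2 - f)) :
    (x - f) * ((x - 1) * (1 + f)) * ((1 + f) * s + 3 * f + 1)
      - (1 + f) * (s + 1) * clearedDenom f x
      = f * (1 + f) / 2 * (2 * x - f - 2 - s) ^ 2 := by
  unfold clearedDenom
  linear_combination (-(f + f * f) / 2) * hs

lemma minValue_le_ratio (hf : 0 < f) (hs0 : 0 ≤ s) (hs : s ^ 2 = f * (2 - f))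
    (hx : 1 + f ≤ x) : minValue f s ≤ ratio f x := by
  rw [minValue, ratio_eq_div_clearedDenom (by linarith) (by linarith),
    div_le_div_iff₀ (by positivity) (clearedDenom_pos hf hx)]
  have hsq : 0 ≤ f * (1 + f) / 2 * (2 * x - f - 2 - s) ^ 2 := by positivity
  linarith [mul_sub_mul_clearedDenom_eq_sq (x := x) hs]

lemma ratio_eq_minValue (hf : 0 < f) (hs0 : 0 ≤ s) (hs : s ^ 2 = f * (2 - f))
    (hx : 1 + f ≤ x) (hxs : 2 * x = f + 2 + s) : ratio f x = minValue f s := by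
  rw [minValue, ratio_eq_div_clearedDenom (by linarith) (by linarith),
    div_eq_div_iff (clearedDenom_pos hf hx).ne' (by positivity)]
  have hsq := mul_sub_mul_clearedDenom_eq_sq (x := x) hs
  rw [show 2 * x - f - 2 - s = 0 by linarith, zero_pow two_ne_zero, mul_zero] at hsq
  linarith

end ThreeVariableRatio

/-- For 0 < f < 1, the function
g(x) = (x - f)/(x + f(x - 1 - x f)/((x-1)(1+f))) on [1+f, ∞) attains its minimum at
x* = (f + 2 + √(f(2-f)))/2, with minimum value
(1+f)(√(f(2-f)) + 1)/((1+f)√(f(2-f)) + 3f + 1). -/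
theorem three_variable_ratio_min (f : ℝ) (h0 : 0 < f) (h1 : f < 1) :
    let g : ℝ → ℝ := fun x =>
      (x - f) / (x + f * (x - 1 - x * f) / ((x - 1) * (1 + f)))
    let xstar : ℝ := (f + 2 + Real.sqrt (f * (2 - f))) / 2
    (∀ x : ℝ, 1 + f ≤ x → g xstar ≤ g x) ∧
      g xstar = (1 + f) * (Real.sqrt (f * (2 - f)) + 1)
        / ((1 + f) * Real.sqrt (f * (2 - f)) + 3 * f + 1) := by
  intro g xstar
  have hs0 : 0 ≤ √(f * (2 - f)) := Real.sqrt_nonneg _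
  have hs : √(f * (2 - f)) ^ 2 = f * (2 - f) := Real.sq_sqrt (by nlinarith)
  have hxstar : 1 + f ≤ xstar := by
    have : f ≤ √(f * (2 - f)) := Real.le_sqrt_of_sq_le (by nlinarith)
    simp only [xstar]
    linarith
  have hmin : g xstar = ThreeVariableRatio.minValue f √(f * (2 - f)) :=
    ThreeVariableRatio.ratio_eq_minValue h0 hs0 hs hxstar (by simp only [xstar]; ring)
  exact ⟨fun x hx => hmin ▸ ThreeVariableRatio.minValue_le_ratio h0 hs0 hs hx, hmin⟩
end

section
/- For 0 < f < 1, the expression (1+f)(sqrt(f(2-f)) + 1) / ((1+f)·sqrt(f(2-f)) + 3f + 1) is strictly less than (1+f)/(1+2f), and the two expressions are equal at f = 1. -/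
/-! Writing `s = √(f(2-f))` and cancelling the common factor `1 + f`, the inequality becomes
`(s + 1)(1 + 2f) < (1 + f)s + 3f + 1`, i.e. `f s < f`. Since `f(2-f) = 1 - (1-f)²`, we have
`s < 1` exactly when `f ≠ 1`. -/

lemma Real.sqrt_mul_two_sub_lt_one {f : ℝ} (hf : f ≠ 1) : √(f * (2 - f)) < 1 := by
  rw [Real.sqrt_lt' one_pos]
  nlinarith [sq_pos_of_ne_zero (sub_ne_zero.mpr hf)]

lemma mul_add_one_div_lt_of_lt_one {f s : ℝ} (hf : 0 < f) (hs0 : 0 ≤ s) (hs1 : s < 1) :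
    (1 + f) * (s + 1) / ((1 + f) * s + 3 * f + 1) < (1 + f) / (1 + 2 * f) := by
  have hfs : f * s < f := mul_lt_of_lt_one_right hf hs1
  rw [div_lt_div_iff₀ (by positivity) (by positivity)]
  nlinarith

/-- For 0 < f < 1,
(1+f)(√(f(2-f)) + 1)/((1+f)√(f(2-f)) + 3f + 1) < (1+f)/(1+2f),
and the two expressions are equal at f = 1. -/
theorem three_variable_beats_two_variable :
    (∀ f : ℝ, 0 < f → f < 1 →
      (1 + f) * (Real.sqrt (f * (2 - f)) + 1)
          / ((1 + f) * Real.sqrt (f * (2 - f)) + 3 * f + 1)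
        < (1 + f) / (1 + 2 * f)) ∧
    (1 + (1:ℝ)) * (Real.sqrt (1 * (2 - 1)) + 1)
        / ((1 + 1) * Real.sqrt (1 * (2 - 1)) + 3 * 1 + 1)
      = (1 + (1:ℝ)) / (1 + 2 * 1) := by
  refine ⟨fun f hf0 hf1 => ?_, by norm_num⟩
  exact mul_add_one_div_lt_of_lt_one hf0 (Real.sqrt_nonneg _)
    (Real.sqrt_mul_two_sub_lt_one hf1.ne)
end

section
/- Let X₁, ..., X_n be independent random variables and T a real number, and let S = Σⱼ 1[Xⱼ ≥ T]. If P(∀j, Xⱼ < T) = e^{-λ}, then S is stochastically dominated by a Poisson random variable with mean λ; in particular, for any integer ℓ ≥ 0, P(S ≤ ℓ) ≥ e^{-λ} · Σ_{k=0}^{ℓ} λ^k / k!. -/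
/-!
Write `P(Xⱼ < T) = e^{-λⱼ}`; by independence `∑ⱼ λⱼ = λ`. The indicator `1[Xⱼ ≥ T]` vanishes with
probability `e^{-λⱼ}`, exactly as a Poisson(`λⱼ`) variable does, and otherwise equals `1`, so it is
stochastically dominated by Poisson(`λⱼ`). Adding the summands one at a time, with `F_a(m)` the
probability that Poisson(`a`) is below `m`, the inductive step is
`F_{a+b}(m) ≤ e^{-b} F_a(m) + (1 - e^{-b}) F_a(m - 1)`, which follows from the convolution identity
`Poisson(a) * Poisson(b) = Poisson(a + b)` and the monotonicity of `F_a`.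
-/

open MeasureTheory ProbabilityTheory Finset Real Nat

noncomputable def poissonProb (l : ℝ) (k : ℕ) : ℝ := exp (-l) * l ^ k / k !

/-- The probability that a Poisson(`l`) variable is *strictly* below `m`. -/
noncomputable def poissonCDF (l : ℝ) (m : ℕ) : ℝ := ∑ k ∈ range m, poissonProb l k

lemma poissonProb_nonneg {l : ℝ} (hl : 0 ≤ l) (k : ℕ) : 0 ≤ poissonProb l k := by
  unfold poissonProb; positivity

lemma poissonProb_zero (l : ℝ) : poissonProb l 0 = exp (-l) := by
  simp [poissonProb]

lemma hasSum_poissonProb (l : ℝ) : HasSum (poissonProb l) 1 := by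
  have h := (NormedSpace.expSeries_div_hasSum_exp l).mul_left (exp (-l))
  rw [← exp_eq_exp_ℝ, ← exp_add, neg_add_cancel, exp_zero] at h
  exact h.congr_fun fun k => mul_div_assoc _ _ _

lemma poissonProb_add (a b : ℝ) (j : ℕ) :
    poissonProb (a + b) j = ∑ k ∈ range (j + 1), poissonProb b k * poissonProb a (j - k) := by
  rw [poissonProb, add_comm a b, add_pow, neg_add, exp_add, mul_sum, sum_div]
  refine sum_congr rfl fun k hk => ?_
  rw [Nat.cast_choose ℝ (Nat.lt_succ_iff.mp (mem_range.mp hk)), poissonProb, poissonProb]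
  field_simp

lemma poissonCDF_le_one {l : ℝ} (hl : 0 ≤ l) (m : ℕ) : poissonCDF l m ≤ 1 :=
  sum_le_hasSum _ (fun k _ => poissonProb_nonneg hl k) (hasSum_poissonProb l)

lemma poissonCDF_mono {l : ℝ} (hl : 0 ≤ l) : Monotone (poissonCDF l) :=
  monotone_nat_of_le_succ fun m => by
    simpa [poissonCDF, sum_range_succ] using poissonProb_nonneg hl m

lemma tsum_ite_poissonProb_eq_one_sub_poissonCDF (l : ℝ) (m : ℕ) :
    ∑' k, (if m ≤ k then poissonProb l k else 0) = 1 - poissonCDF l m := by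
  have hhead : HasSum (fun k => if k < m then poissonProb l k else 0) (poissonCDF l m) := by
    have : HasSum (fun k => if k < m then poissonProb l k else 0)
        (∑ k ∈ range m, if k < m then poissonProb l k else 0) :=
      hasSum_sum_of_ne_finset_zero fun k hk => if_neg (by simpa using hk)
    rwa [sum_congr rfl fun k hk => if_pos (mem_range.mp hk)] at this
  refine ((hasSum_poissonProb l).sub hhead).tsum_eq ▸ tsum_congr fun k => ?_
  split_ifs <;> first | omega | simp

lemma poissonCDF_add (a b : ℝ) (m : ℕ) :
    poissonCDF (a + b) m = ∑ k ∈ range m, poissonProb b k * poissonCDF a (m - k) := by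
  simp only [poissonCDF, poissonProb_add, mul_sum]
  exact sum_range_diag_flip m fun k i => poissonProb b k * poissonProb a i

lemma poissonCDF_add_le {a b : ℝ} (ha : 0 ≤ a) (hb : 0 ≤ b) (m : ℕ) :
    poissonCDF (a + b) m ≤
      exp (-b) * poissonCDF a m + (1 - exp (-b)) * poissonCDF a (m - 1) := by
  rcases m with _ | n
  · simp [poissonCDF]
  have htail : ∑ k ∈ range n, poissonProb b (k + 1) ≤ 1 - exp (-b) := by
    have := poissonCDF_le_one hb (n + 1)
    rw [poissonCDF, sum_range_succ', poissonProb_zero] at this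
    linarith
  have hshifted : ∑ k ∈ range n, poissonProb b (k + 1) * poissonCDF a (n + 1 - (k + 1))
      ≤ (1 - exp (-b)) * poissonCDF a n :=
    calc _ ≤ ∑ k ∈ range n, poissonProb b (k + 1) * poissonCDF a n := by
          gcongr with k hk
          · exact poissonProb_nonneg hb _
          · exact poissonCDF_mono ha (by omega)
      _ ≤ (1 - exp (-b)) * poissonCDF a n := by
          rw [← sum_mul]
          gcongr
          exact sum_nonneg fun k _ => poissonProb_nonneg ha k
  rw [poissonCDF_add, sum_range_succ', poissonProb_zero, Nat.sub_zero, Nat.add_sub_cancel]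
  linarith

section
variable {Ω : Type*} [MeasurableSpace Ω] {μ : Measure Ω} [IsProbabilityMeasure μ]

lemma ProbabilityTheory.IndepFun.measureReal_add_lt_of_le_one {Y Z : Ω → ℕ}
    (hYZ : IndepFun Y Z μ) (hY : Measurable Y) (hZ : Measurable Z) (hY1 : ∀ ω, Y ω ≤ 1) (m : ℕ) :
    μ.real {ω | Y ω + Z ω < m} = μ.real {ω | Y ω = 0} * μ.real {ω | Z ω < m}
      + (1 - μ.real {ω | Y ω = 0}) * μ.real {ω | Z ω < m - 1} := by
  have hmul (A B : Set ℕ) : μ.real (Y ⁻¹' A ∩ Z ⁻¹' B) = μ.real (Y ⁻¹' A) * μ.real (Z ⁻¹' B) := by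
    simp only [measureReal_def, hYZ.measure_inter_preimage_eq_mul A B .of_discrete .of_discrete,
      ENNReal.toReal_mul]
  have hsplit : {ω | Y ω + Z ω < m} = (Y ⁻¹' {0} ∩ Z ⁻¹' Set.Iio m)
      ∪ (Y ⁻¹' {0}ᶜ ∩ Z ⁻¹' Set.Iio (m - 1)) := by
    ext ω
    have := hY1 ω
    simp only [Set.mem_ofPred_eq, Set.mem_union, Set.mem_inter_iff, Set.mem_preimage,
      Set.mem_compl_iff, Set.mem_singleton_iff, Set.mem_Iio]
    omega
  rw [hsplit, measureReal_union, hmul, hmul, Set.preimage_compl, probReal_compl_eq_one_sub]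
  · rfl
  · exact hY (.singleton 0)
  · exact Set.disjoint_left.mpr fun ω h h' => h'.1 h.1
  · exact ((hY (.singleton 0)).compl).inter (hZ measurableSet_Iio)

lemma poissonCDF_sum_le_measureReal_sum_lt {ι : Type*} {f : ι → Ω → ℕ}
    (hf : ∀ j, Measurable (f j)) (hf1 : ∀ j ω, f j ω ≤ 1) (hind : iIndepFun f μ)
    {lam : ι → ℝ} (hlam : ∀ j, μ.real {ω | f j ω = 0} = exp (-lam j)) (s : Finset ι) (m : ℕ) :
    poissonCDF (∑ j ∈ s, lam j) m ≤ μ.real {ω | ∑ j ∈ s, f j ω < m} := by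
  classical
  have hlam_nonneg (j : ι) : 0 ≤ lam j := by
    have h := measureReal_le_one (μ := μ) (s := {ω | f j ω = 0})
    rwa [hlam j, exp_le_one_iff, neg_nonpos] at h
  induction s using Finset.induction_on generalizing m with
  | empty =>
    rcases m with _ | m
    · simp [poissonCDF]
    · simpa using poissonCDF_le_one le_rfl (m + 1)
  | insert j s hj ih =>
    have hindep : IndepFun (f j) (fun ω => ∑ i ∈ s, f i ω) μ := by
      simpa only [sum_fn] using (hind.indepFun_finsetSum_of_notMem hf hj).symm
    simp only [sum_insert hj]
    rw [hindep.measureReal_add_lt_of_le_one (hf j) (by fun_prop) (hf1 j), hlam j, add_comm]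
    have hexp : exp (-lam j) ≤ 1 := exp_le_one_iff.mpr (neg_nonpos.mpr (hlam_nonneg j))
    calc _ ≤ _ := poissonCDF_add_le (sum_nonneg fun i _ => hlam_nonneg i) (hlam_nonneg j) m
      _ ≤ _ := by gcongr <;> exact ih _

lemma measureReal_le_le_tsum_poissonProb {S : Ω → ℕ} (hS : Measurable S) {l : ℝ} {m : ℕ}
    (h : poissonCDF l m ≤ μ.real {ω | S ω < m}) :
    μ.real {ω | m ≤ S ω} ≤ ∑' k, if m ≤ k then poissonProb l k else 0 := by
  have hcompl : {ω | m ≤ S ω} = {ω | S ω < m}ᶜ := by ext; simp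
  have hlt : MeasurableSet {ω | S ω < m} := hS measurableSet_Iio
  rw [tsum_ite_poissonProb_eq_one_sub_poissonCDF, hcompl, probReal_compl_eq_one_sub hlt]
  linarith

end

theorem count_above_threshold_poisson_dominated_general
    {Ω : Type*} [MeasurableSpace Ω] (μ : Measure Ω) [IsProbabilityMeasure μ]
    (n : ℕ) (X : Fin n → Ω → ℝ) (hmeas : ∀ j, Measurable (X j))
    (hindep : iIndepFun X μ)
    (T lam : ℝ)
    (hZero : μ {ω | ∀ j, X j ω < T} = ENNReal.ofReal (Real.exp (-lam)))
    (S : Ω → ℕ) (hS : ∀ ω, S ω = ∑ j, if T ≤ X j ω then 1 else 0) :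
    (∀ m : ℕ,
      (μ {ω | m ≤ S ω}).toReal ≤ ∑' k : ℕ, if m ≤ k then Real.exp (-lam) * lam ^ k / k.factorial else 0) ∧
    (∀ ℓ : ℕ,
      Real.exp (-lam) * ∑ k ∈ Finset.range (ℓ + 1), lam ^ k / k.factorial ≤
        (μ {ω | S ω ≤ ℓ}).toReal) := by
  have hmeas_ind : Measurable fun x : ℝ => if T ≤ x then (1 : ℕ) else 0 :=
    Measurable.ite measurableSet_Ici measurable_const measurable_const
  have hSmeas : Measurable S :=
    funext hS ▸ measurable_sum _ fun j _ => hmeas_ind.comp (hmeas j)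
  have hprod : ∏ j, μ.real {ω | X j ω < T} = exp (-lam) := by
    have h := hindep.meas_iInter (s := fun j => {ω | X j ω < T})
      fun _ => ⟨_, measurableSet_Iio, rfl⟩
    rw [Set.iInter_ofPred, hZero] at h
    simp only [measureReal_def, ← ENNReal.toReal_prod, ← h, ENNReal.toReal_ofReal (exp_pos _).le]
  have hpos (j : Fin n) : 0 < μ.real {ω | X j ω < T} :=
    measureReal_nonneg.lt_of_ne (prod_ne_zero_iff.mp (hprod ▸ (exp_pos _).ne') j (mem_univ j)).symm
  have hSlt (m : ℕ) : poissonCDF lam m ≤ μ.real {ω | S ω < m} := by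
    have hsum : ∑ j, -log (μ.real {ω | X j ω < T}) = lam := by
      rw [sum_neg_distrib, ← log_prod fun j _ => (hpos j).ne', hprod, log_exp, neg_neg]
    have := poissonCDF_sum_le_measureReal_sum_lt (fun j => hmeas_ind.comp (hmeas j))
      (fun j ω => by simp only [Function.comp_apply]; split <;> simp)
      (hindep.comp _ fun _ => hmeas_ind)
      (lam := fun j => -log (μ.real {ω | X j ω < T})) (fun j => by simp [exp_log (hpos j)]) univ m
    simpa [hsum, hS] using this
  exact ⟨fun m => measureReal_le_le_tsum_poissonProb hSmeas (hSlt m), fun ℓ => by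
    simpa [poissonCDF, poissonProb, mul_sum, mul_div_assoc, Nat.lt_succ_iff, measureReal_def]
      using hSlt (ℓ + 1)⟩

/-- Let X₁,...,Xₙ be independent random variables, T real,
S = Σⱼ 1[Xⱼ ≥ T]. If P(∀ j, Xⱼ < T) = e^{-λ}, then S is stochastically dominated by a
Poisson(λ) variable — i.e. P(S ≥ m) ≤ P(Poisson(λ) ≥ m) for all m — and in particular
P(S ≤ ℓ) ≥ e^{-λ}·Σ_{k=0}^{ℓ} λ^k/k! for every ℓ ≥ 0. -/
theorem count_above_threshold_poisson_dominated
    {Ω : Type*} [MeasurableSpace Ω] (μ : Measure Ω) [IsProbabilityMeasure μ]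
    (n : ℕ) (X : Fin n → Ω → ℝ) (hmeas : ∀ j, Measurable (X j))
    (hindep : iIndepFun X μ)
    (T lam : ℝ) (hlam : 0 ≤ lam)
    (hZero : μ {ω | ∀ j, X j ω < T} = ENNReal.ofReal (Real.exp (-lam)))
    (S : Ω → ℕ) (hS : ∀ ω, S ω = ∑ j, if T ≤ X j ω then 1 else 0) :
    (∀ m : ℕ,
      (μ {ω | m ≤ S ω}).toReal ≤ ∑' k : ℕ, if m ≤ k then Real.exp (-lam) * lam ^ k / k.factorial else 0) ∧
    (∀ ℓ : ℕ,
      Real.exp (-lam) * ∑ k ∈ Finset.range (ℓ + 1), lam ^ k / k.factorial ≤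
        (μ {ω | S ω ≤ ℓ}).toReal) :=
  count_above_threshold_poisson_dominated_general μ n X hmeas hindep T lam hZero S hS
end

section
/- For every f ∈ (0, 1/2), the following inequality chain holds: (2 + 1/f)^{f/(1+f)} < (2/f)^f = e^{f·ln(2/f)} < 1 + 2f·ln(2/f), and consequently 1/( f/(1+f) + (2 + 1/f)^{f/(1+f)} ) > 1/(1 + 2f·ln(4/f)) > 1 - 2f·ln(4/f). -/
/-!
Both bases exceed 1 and `2 + 1/f < 2/f` exactly when `f < 1/2`, so raising the larger base to the
larger exponent `f > f/(1+f)` gives the first inequality. Applying `2x ≤ eˣ` at `x = log (2/f)`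
yields `f log (2/f) ≤ 1`, the range where `eˣ < 1 + 2x`. Finally `f/(1+f) < f < 2f log 2` and
`log (4/f) = log 2 + log (2/f)` absorb the extra summand of the denominator.
-/

open Real

lemma rpow_lt_rpow_of_lt_of_exponent_lt {a b s t : ℝ} (ha : 0 ≤ a) (hab : a < b) (hb : 1 < b)
    (hs : 0 < s) (hst : s < t) : a ^ s < b ^ t :=
  calc a ^ s < b ^ s := rpow_lt_rpow ha hab hs
    _ < b ^ t := rpow_lt_rpow_of_exponent_lt hb hst

lemma mul_log_two_div_le_one {f : ℝ} (hf : 0 < f) : f * log (2 / f) ≤ 1 := by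
  have h := two_mul_le_exp (x := log (2 / f))
  rw [exp_log (by positivity)] at h
  have := mul_le_mul_of_nonneg_left h (half_pos hf).le
  field_simp at this
  linarith

lemma exp_lt_one_add_two_mul {x : ℝ} (hx : 0 < x) (hx1 : x ≤ 1) : exp x < 1 + 2 * x := by
  have h := exp_bound' hx.le hx1 (n := 2) two_pos
  norm_num [Finset.sum_range_succ] at h
  nlinarith

lemma one_sub_lt_one_div_one_add {y : ℝ} (hy : 0 < 1 + y) (hy0 : y ≠ 0) :
    1 - y < 1 / (1 + y) := by
  rw [lt_div_iff₀ hy]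
  nlinarith [sq_pos_of_ne_zero hy0]

/-- For f ∈ (0, 1/2):
(2 + 1/f)^(f/(1+f)) < (2/f)^f = e^{f·ln(2/f)} < 1 + 2f·ln(2/f), and consequently
1/(f/(1+f) + (2 + 1/f)^(f/(1+f))) > 1/(1 + 2f·ln(4/f)) > 1 - 2f·ln(4/f). -/
theorem small_buyback_ratio_asymptotics (f : ℝ) (h0 : 0 < f) (h1 : f < 1 / 2) :
    (2 + 1 / f) ^ (f / (1 + f)) < (2 / f) ^ f ∧
    (2 / f) ^ f = Real.exp (f * Real.log (2 / f)) ∧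
    Real.exp (f * Real.log (2 / f)) < 1 + 2 * f * Real.log (2 / f) ∧
    1 / (1 + 2 * f * Real.log (4 / f))
      < 1 / (f / (1 + f) + (2 + 1 / f) ^ (f / (1 + f))) ∧
    1 - 2 * f * Real.log (4 / f) < 1 / (1 + 2 * f * Real.log (4 / f)) := by
  have hf2 : 1 < 2 / f := by rw [lt_div_iff₀ h0]; linarith
  have hbase : 2 + 1 / f < 2 / f := by
    rw [← sub_pos]; field_simp; linarith
  have hexp : f / (1 + f) < f := by rw [div_lt_iff₀ (by positivity)]; nlinarith
  have p1 : (2 + 1 / f) ^ (f / (1 + f)) < (2 / f) ^ f :=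
    rpow_lt_rpow_of_lt_of_exponent_lt (by positivity) hbase hf2 (by positivity) hexp
  have p2 : (2 / f) ^ f = exp (f * log (2 / f)) := by
    rw [rpow_def_of_pos (by positivity), mul_comm]
  have p3 : exp (f * log (2 / f)) < 1 + 2 * f * log (2 / f) := by
    simpa only [mul_assoc] using
      exp_lt_one_add_two_mul (mul_pos h0 (log_pos hf2)) (mul_log_two_div_le_one h0)
  have hlog4 : log (4 / f) = log 2 + log (2 / f) := by
    rw [← log_mul two_ne_zero (by positivity)]; ring_nf
  have hden : f / (1 + f) + (2 + 1 / f) ^ (f / (1 + f)) < 1 + 2 * f * log (4 / f) := by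
    have : f < 2 * f * log 2 := by nlinarith [log_two_gt_d9]
    rw [hlog4]
    linarith
  have hlogpos : 0 < 2 * f * log (4 / f) := by
    rw [hlog4]; nlinarith [log_pos hf2, log_two_gt_d9]
  exact ⟨p1, p2, p3, one_div_lt_one_div_of_lt (by positivity) hden,
    one_sub_lt_one_div_one_add (by linarith) hlogpos.ne'⟩
end

section
/- Let 0 < f < 1/256, n = ⌈log₂(1/f)⌉, and define a_n = 1, a_{n-k-1} = (1 - (f/(1+f))·2^k)·a_{n-k}. Set ALG = 1 - f·Σ_{k=1}^{n-1} a_{n-k} and OPT = Σ_{k=0}^{n-1} 2^{-(k+1)}·a_{n-k}. Then ALG ≤ 1 + 3f - f·log₂(1/f), OPT ≥ 1 - f - (1/2)·f·log₂(1/f), and ALG < (1 - (1/2)·f·log₂(1/(256f)))·OPT. -/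
/-!
With `c = f/(1+f)` the recursion gives `a_{n-k} = ∏_{i<k} (1 - c 2^i)`, and as long as every factor
is in `[0, 1]` the Weierstrass product inequality yields `a_{n-k} ≥ 1 - c (2^k - 1)`. Since
`1/f ≤ 2^n < 2/f`, this holds for all `k < n`. Summing the lower bound against the weights of ALG
and OPT, and using `L ≤ n < L + 1` for `L = log₂(1/f)`, gives the first two estimates. The third
follows by multiplying them, since `log₂(1/(256f)) = L - 8` with `L > 8`.
-/

open Finset Real

theorem Finset.one_sub_sum_le_prod_one_sub {ι : Type*} (s : Finset ι) {x : ι → ℝ}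
    (hx0 : ∀ i ∈ s, 0 ≤ x i) (hx1 : ∀ i ∈ s, x i ≤ 1) :
    1 - ∑ i ∈ s, x i ≤ ∏ i ∈ s, (1 - x i) := by
  classical
  induction s using Finset.induction_on with
  | empty => simp
  | insert a s has ih =>
    rw [sum_insert has, prod_insert has]
    have hS : 0 ≤ ∑ i ∈ s, x i := sum_nonneg fun i hi ↦ hx0 i (mem_insert_of_mem hi)
    have hxa0 := hx0 a (mem_insert_self a s)
    have hxa1 := hx1 a (mem_insert_self a s)
    have ih' := ih (fun i hi ↦ hx0 i (mem_insert_of_mem hi))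
      (fun i hi ↦ hx1 i (mem_insert_of_mem hi))
    nlinarith [mul_le_mul_of_nonneg_left ih' (sub_nonneg.2 hxa1)]

theorem Real.le_pow_natCeil_logb {b x : ℝ} (hb : 1 < b) (hx : 0 < x) : x ≤ b ^ ⌈logb b x⌉₊ := by
  rw [← rpow_natCast, ← logb_le_iff_le_rpow hb hx]
  exact Nat.le_ceil _

theorem Real.pow_natCeil_logb_lt {b x : ℝ} (hb : 1 < b) (hx : 1 ≤ x) :
    b ^ ⌈logb b x⌉₊ < b * x :=
  calc b ^ ⌈logb b x⌉₊ = b ^ (⌈logb b x⌉₊ : ℝ) := (rpow_natCast b _).symm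
    _ < b ^ (logb b x + 1) :=
      rpow_lt_rpow_of_exponent_lt hb (Nat.ceil_lt_add_one (logb_nonneg hb hx))
    _ = b * x := by
      rw [rpow_add_one (by positivity), rpow_logb (by positivity) hb.ne' (by positivity), mul_comm]

theorem mul_two_pow_natCeil_logb_one_div_mem_Ico {f : ℝ} (hf0 : 0 < f) (hf1 : f ≤ 1) :
    1 ≤ f * 2 ^ ⌈logb 2 (1 / f)⌉₊ ∧ f * 2 ^ ⌈logb 2 (1 / f)⌉₊ < 2 := by
  constructor
  · have := le_pow_natCeil_logb one_lt_two (one_div_pos.2 hf0)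
    rwa [div_le_iff₀' hf0] at this
  · have := pow_natCeil_logb_lt one_lt_two ((one_le_div hf0).2 hf1)
    rwa [mul_one_div, lt_div_iff₀' hf0] at this

section

variable {c : ℝ} {b : ℕ → ℝ} {n : ℕ}

theorem one_sub_mul_two_pow_sub_one_le (hc : 0 ≤ c) (hb0 : b 0 = 1)
    (hrec : ∀ k, b (k + 1) = (1 - c * 2 ^ k) * b k) (hcn : c * 2 ^ n ≤ 2) {k : ℕ} (hk : k ≤ n) :
    1 - c * (2 ^ k - 1) ≤ b k := by
  have hprod : ∏ i ∈ range k, (1 - c * 2 ^ i) = b k :=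
    prod_range_induction _ _ hb0 k fun i _ ↦ by rw [hrec, mul_comm]
  have hgeom : ∑ i ∈ range k, c * 2 ^ i = c * (2 ^ k - 1) := by
    rw [← mul_sum, geom_sum_eq (by norm_num)]; ring
  rw [← hprod, ← hgeom]
  refine one_sub_sum_le_prod_one_sub _ (fun i _ ↦ by positivity) fun i hi ↦ ?_
  have : (2 : ℝ) ^ (i + 1) ≤ 2 ^ n :=
    pow_le_pow_right₀ one_le_two (by have := mem_range.1 hi; omega)
  rw [pow_succ] at this
  nlinarith

theorem sub_one_sub_mul_two_pow_le_sum_Icc (hc : 0 ≤ c)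
    (hb : ∀ k < n, 1 - c * (2 ^ k - 1) ≤ b k) :
    (n : ℝ) - 1 - c * 2 ^ n ≤ ∑ k ∈ Icc 1 (n - 1), b k := by
  have hsub : Icc 1 (n - 1) ⊆ range n := fun k hk ↦ by
    simp only [mem_Icc, mem_range] at hk ⊢; omega
  have hgeom : ∑ k ∈ Icc 1 (n - 1), (2 : ℝ) ^ k ≤ 2 ^ n :=
    calc ∑ k ∈ Icc 1 (n - 1), (2 : ℝ) ^ k ≤ ∑ k ∈ range n, (2 : ℝ) ^ k :=
          sum_le_sum_of_subset_of_nonneg hsub fun _ _ _ ↦ by positivity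
      _ = 2 ^ n - 1 := by rw [geom_sum_eq (by norm_num)]; ring
      _ ≤ 2 ^ n := by linarith
  have hcard : (n : ℝ) - 1 ≤ #(Icc 1 (n - 1)) := by
    rw [Nat.card_Icc]; rcases n with _ | n <;> simp
  calc (n : ℝ) - 1 - c * 2 ^ n ≤ #(Icc 1 (n - 1)) - c * ∑ k ∈ Icc 1 (n - 1), (2 : ℝ) ^ k := by
        nlinarith [mul_le_mul_of_nonneg_left hgeom hc]
    _ = ∑ k ∈ Icc 1 (n - 1), (1 - c * 2 ^ k) := by
        rw [sum_sub_distrib, mul_sum, sum_const, nsmul_one]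
    _ ≤ ∑ k ∈ Icc 1 (n - 1), b k := sum_le_sum fun k hk ↦ by
        have := hb k (mem_range.1 (hsub hk)); nlinarith

theorem le_sum_half_pow_succ_mul (hb : ∀ k < n, 1 - c * (2 ^ k - 1) ≤ b k) :
    (1 + c) * (1 - (1 / 2) ^ n) - c * n / 2 ≤ ∑ k ∈ range n, (1 / 2 : ℝ) ^ (k + 1) * b k := by
  have hterm (k : ℕ) :
      (1 / 2 : ℝ) ^ (k + 1) * (1 - c * (2 ^ k - 1)) = (1 + c) * (1 / 2) ^ (k + 1) - c / 2 := by
    have : (1 / 2 : ℝ) ^ (k + 1) * 2 ^ k = 1 / 2 := by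
      rw [pow_succ, mul_right_comm, ← mul_pow]; norm_num
    linear_combination (-c) * this
  have hgeom : ∑ k ∈ range n, (1 / 2 : ℝ) ^ (k + 1) = 1 - (1 / 2) ^ n := by
    simp only [pow_succ, ← sum_mul, geom_sum_eq (by norm_num : (1 / 2 : ℝ) ≠ 1)]
    ring
  calc (1 + c) * (1 - (1 / 2) ^ n) - c * n / 2
      = ∑ k ∈ range n, (1 / 2 : ℝ) ^ (k + 1) * (1 - c * (2 ^ k - 1)) := by
        simp only [hterm, sum_sub_distrib, ← mul_sum, hgeom, sum_const, card_range, nsmul_eq_mul]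
        ring
    _ ≤ ∑ k ∈ range n, (1 / 2 : ℝ) ^ (k + 1) * b k :=
        sum_le_sum fun k hk ↦ mul_le_mul_of_nonneg_left (hb k (mem_range.1 hk)) (by positivity)

end

theorem add_three_mul_sub_mul_lt {f L : ℝ} (hf : 0 < f) (hL : 8 < L) :
    1 + 3 * f - f * L < (1 - 1 / 2 * f * (L - 8)) * (1 - f - 1 / 2 * f * L) := by
  have key : (1 - 1 / 2 * f * (L - 8)) * (1 - f - 1 / 2 * f * L) - (1 + 3 * f - f * L)
      = f ^ 2 * (L - 8) * (L + 2) / 4 := by ring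
  have : 0 < f ^ 2 * (L - 8) * (L + 2) / 4 := by
    have : 0 < L - 8 := sub_pos.2 hL
    have : 0 < L + 2 := by linarith
    positivity
  linarith

/-- Let 0 < f < 1/256, n = ⌈log₂(1/f)⌉, a_n = 1,
a_{n-k-1} = (1 - (f/(1+f))·2^k)·a_{n-k} (here b k = a_{n-k}),
ALG = 1 - f·Σ_{k=1}^{n-1} a_{n-k} and OPT = Σ_{k=0}^{n-1} 2^{-(k+1)}·a_{n-k}. Then
ALG ≤ 1 + 3f - f·log₂(1/f), OPT ≥ 1 - f - (1/2)f·log₂(1/f), and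
ALG < (1 - (1/2)f·log₂(1/(256f)))·OPT. -/
theorem multistage_counterexample_bounds (f : ℝ) (h0 : 0 < f) (h1 : f < 1 / 256)
    (n : ℕ) (hn : n = ⌈Real.logb 2 (1 / f)⌉₊)
    (b : ℕ → ℝ) (hb0 : b 0 = 1)
    (hbrec : ∀ k : ℕ, b (k + 1) = (1 - f / (1 + f) * 2 ^ k) * b k) :
    let ALG : ℝ := 1 - f * ∑ k ∈ Finset.Icc 1 (n - 1), b k
    let OPT : ℝ := ∑ k ∈ Finset.range n, (1 / 2 : ℝ) ^ (k + 1) * b k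
    ALG ≤ 1 + 3 * f - f * Real.logb 2 (1 / f) ∧
    1 - f - (1 / 2) * f * Real.logb 2 (1 / f) ≤ OPT ∧
    ALG < (1 - (1 / 2) * f * Real.logb 2 (1 / (256 * f))) * OPT := by
  intro ALG OPT
  set L := logb 2 (1 / f)
  set c := f / (1 + f)
  have hc0 : 0 ≤ c := by positivity
  have hcf : c ≤ f := div_le_self h0.le (by linarith)
  have hlog256 : logb 2 (1 / (256 * f)) = L - 8 := by
    rw [show 1 / (256 * f) = 1 / f / 2 ^ 8 by ring, logb_div (by positivity) (by positivity),
      logb_pow, logb_self_eq_one one_lt_two]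
    norm_num [L]
  have hL8 : 8 < L := by
    have : 0 < logb 2 (1 / (256 * f)) :=
      logb_pos one_lt_two (by rw [lt_div_iff₀ (by positivity)]; linarith)
    linarith
  have hLn : L ≤ n := hn ▸ Nat.le_ceil L
  have hnL : n < L + 1 := hn ▸ Nat.ceil_lt_add_one (by linarith)
  obtain ⟨h2n_ge, h2n_lt⟩ := hn ▸ mul_two_pow_natCeil_logb_one_div_mem_Ico h0 (by linarith)
  have hcn : c * 2 ^ n ≤ 2 := (mul_le_mul_of_nonneg_right hcf (by positivity)).trans h2n_lt.le
  have hb : ∀ k < n, 1 - c * (2 ^ k - 1) ≤ b k := fun k hk ↦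
    one_sub_mul_two_pow_sub_one_le hc0 hb0 hbrec hcn hk.le
  have hALG : ALG ≤ 1 + 3 * f - f * L := by
    nlinarith [sub_one_sub_mul_two_pow_le_sum_Icc hc0 hb]
  have hOPT : 1 - f - 1 / 2 * f * L ≤ OPT := by
    have : (1 / 2 : ℝ) ^ n ≤ f := by
      rw [div_pow, one_pow, div_le_iff₀ (by positivity)]; linarith
    nlinarith [le_sum_half_pow_succ_mul hb]
  have hfL : f * L < 2 := by
    have : (n : ℝ) < 2 ^ n := by exact_mod_cast Nat.lt_two_pow_self
    nlinarith
  refine ⟨hALG, hOPT, ?_⟩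
  rw [hlog256]
  calc ALG ≤ 1 + 3 * f - f * L := hALG
    _ < (1 - 1 / 2 * f * (L - 8)) * (1 - f - 1 / 2 * f * L) := add_three_mul_sub_mul_lt h0 hL8
    _ ≤ (1 - 1 / 2 * f * (L - 8)) * OPT := mul_le_mul_of_nonneg_left hOPT (by nlinarith)
end

section
/- Let f ∈ [1/3, 1), c = f/(1+f), a = f(1 - sqrt(f(2-f)))²/((1+f)(1-f)²), and θ = (1+f)(sqrt(f(2-f))+1)/((1+f)·sqrt(f(2-f)) + 3f + 1). Define y(t) = (t-c)²/(1-c) - a for t ∈ [y(1), 1] and y(t) = sqrt((1+f)/(t+a))·((t-c)² - c·(sqrt(t+a) - sqrt(c+a))²) for t ∈ [c, y(1)], where y(1) = 2 - 1/θ. Then y(c) = 0, and the two branches agree at t = y(1). -/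
/-! With `s = √(f(2-f))` one has `(1-f)² = (1-s)(1+s)`, which turns `a` and `y(1)` into rational
functions of `f` and `s`. Then `y(1) + a = 1/(1+f)` and, since `(f+s)² = 2f(1+s)`,
`c + a = r²(y(1) + a)` with `r = (f+s)/(1+s)`; so every square root at `t = y(1)` evaluates, and the
agreement of the branches reduces to `a = c(1-r)²`. Finally `c < y(1)`, so `y(c)` is taken on the
square-root branch, which vanishes at `t = c`. -/

open Real

lemma quadratic_branch_eq_sqrt_branch {k c a t r : ℝ} (hk : 0 < k) (hr : 0 ≤ r)
    (hc : k * (1 - c) = 1) (ht : k * (t + a) = 1) (hca : c + a = r ^ 2 * (t + a)) (ha : a = c * (1 - r) ^ 2) :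
    (t - c) ^ 2 / (1 - c) - a
      = √(k / (t + a)) * ((t - c) ^ 2 - c * (√(t + a) - √(c + a)) ^ 2) := by
  have hta : 0 < t + a := by nlinarith
  have hsqrt_k : √(k / (t + a)) = k := by
    rw [show k / (t + a) = k ^ 2 by field_simp; linarith, sqrt_sq hk.le]
  have hsqrt_ca : √(c + a) = r * √(t + a) := by
    rw [hca, sqrt_mul (sq_nonneg r), sqrt_sq hr]
  have hdiff : (√(t + a) - √(c + a)) ^ 2 = (1 - r) ^ 2 * (t + a) := by
    rw [hsqrt_ca]
    linear_combination (1 - r) ^ 2 * sq_sqrt hta.le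
  rw [hsqrt_k, hdiff, show 1 - c = 1 / k by field_simp; linarith]
  field_simp
  linear_combination c * (1 - r) ^ 2 * ht - ha

variable {f s : ℝ}

lemma one_sub_sq_eq_of_sq_eq (hs : s ^ 2 = f * (2 - f)) : (1 - f) ^ 2 = (1 - s) * (1 + s) := by
  linear_combination hs

lemma shift_eq (hs : s ^ 2 = f * (2 - f)) (hs0 : 0 ≤ s) (hf : f ≠ 1) :
    f * (1 - s) ^ 2 / ((1 + f) * (1 - f) ^ 2) = f * (1 - s) / ((1 + f) * (1 + s)) := by
  have h1s : 1 - s ≠ 0 := by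
    intro h
    have := one_sub_sq_eq_of_sq_eq hs
    rw [h, zero_mul] at this
    exact hf (by nlinarith)
  rw [one_sub_sq_eq_of_sq_eq hs]
  field_simp

lemma endpoint_eq (hf : 0 < 1 + f) (hs0 : 0 ≤ s) :
    2 - 1 / ((1 + f) * (s + 1) / ((1 + f) * s + 3 * f + 1))
      = ((1 + f) * s + 1 - f) / ((1 + f) * (1 + s)) := by
  rw [one_div_div]
  field_simp
  ring

lemma le_sqrt_mul_two_sub (hf0 : 0 ≤ f) (hf1 : f ≤ 1) : f ≤ √(f * (2 - f)) :=
  le_sqrt_of_sq_le (by nlinarith)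

/-- For f ∈ [1/3, 1), with c = f/(1+f),
a = f(1-√(f(2-f)))²/((1+f)(1-f)²), θ = (1+f)(√(f(2-f))+1)/((1+f)√(f(2-f))+3f+1) and
y(1) = 2 - 1/θ, the two-branch function
y(t) = (t-c)²/(1-c) - a on [y(1), 1] and
y(t) = √((1+f)/(t+a))·((t-c)² - c(√(t+a) - √(c+a))²) on [c, y(1)]
satisfies y(c) = 0 and the branches agree at t = y(1). -/
theorem closed_form_solution_middle_f (f : ℝ) (h1 : 1 / 3 ≤ f) (h2 : f < 1) :
    let c : ℝ := f / (1 + f)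
    let a : ℝ := f * (1 - Real.sqrt (f * (2 - f))) ^ 2 / ((1 + f) * (1 - f) ^ 2)
    let θ : ℝ := (1 + f) * (Real.sqrt (f * (2 - f)) + 1)
      / ((1 + f) * Real.sqrt (f * (2 - f)) + 3 * f + 1)
    let y1 : ℝ := 2 - 1 / θ
    let y : ℝ → ℝ := fun t =>
      if y1 ≤ t then (t - c) ^ 2 / (1 - c) - a
      else Real.sqrt ((1 + f) / (t + a))
        * ((t - c) ^ 2 - c * (Real.sqrt (t + a) - Real.sqrt (c + a)) ^ 2)
    y c = 0 ∧
    (y1 - c) ^ 2 / (1 - c) - a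
      = Real.sqrt ((1 + f) / (y1 + a))
        * ((y1 - c) ^ 2 - c * (Real.sqrt (y1 + a) - Real.sqrt (c + a)) ^ 2) := by
  intro c a θ y1 y
  have hf0 : 0 < f := by linarith
  have hfs : f ≤ √(f * (2 - f)) := le_sqrt_mul_two_sub hf0.le h2.le
  set s := √(f * (2 - f))
  have hs : s ^ 2 = f * (2 - f) := sq_sqrt (by nlinarith)
  have hs0 : 0 ≤ s := sqrt_nonneg _
  have ha : a = f * (1 - s) / ((1 + f) * (1 + s)) := shift_eq hs hs0 h2.ne
  have hy1 : y1 = ((1 + f) * s + 1 - f) / ((1 + f) * (1 + s)) := endpoint_eq (by linarith) hs0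
  have hc : c = f / (1 + f) := rfl
  have hcy1 : c < y1 := by
    rw [hy1, div_lt_div_iff₀ (by positivity) (by positivity)]
    nlinarith
  refine ⟨by simp [y, hcy1.not_ge], ?_⟩
  apply quadratic_branch_eq_sqrt_branch (k := 1 + f) (r := (f + s) / (1 + s))
    (by positivity) (by positivity)
  · rw [hc]; field_simp; ring
  · rw [hy1, ha]; field_simp; ring
  · rw [hy1, ha, hc]; field_simp; linear_combination -(1 + s) * hs
  · rw [ha, hc]; field_simp; linear_combination -hs
end
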